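/- Let T be a finite rooted tree whose children at each vertex are linearly ordered, with DFS preorder x_1, …, x_N. For an integer n ≤ N let U = {x_1, …, x_n}, and let X be the set of vertices x ∈ U such that D[x] ⊆ U and either x is the root or D[x*] ⊄ U for the parent x* of x. Then the set U \ ⋃_{x∈X} D[x] contains at most one vertex of each level of T. -/
import Mathlib


/-- A DFS-ordered rooted tree on the vertices `0, 1, …, N-1`, listed in DFS preorder
(the root is `0` and the children of each vertex are ordered by their labels).
It is encoded by its parent function: `parent j < j` for every non-root vertex `j`, and the
labelling is a DFS preorder exactly when the parent of each vertex `j ≥ 1` is `j - 1` or an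
ancestor of `j - 1`. By convention `parent 0 = 0`. -/
structure DFSTree (N : ℕ) : Type where
  parent : ℕ → ℕ
  parent_zero : parent 0 = 0
  parent_lt : ∀ j, 0 < j → j < N → parent j < j
  preorder_chain : ∀ j, 0 < j → j < N → ∃ k, parent^[k] (j - 1) = parent j

namespace DFSTree

variable {N : ℕ}

/-- The level `L u` of a vertex `u`: its distance to the root `0`. -/
noncomputable def level (T : DFSTree N) (u : ℕ) : ℕ :=
  sInf {k | T.parent^[k] u = 0}

/-- `D[u]`: the set of descendants of `u`, including `u` itself. -/
def descCl (T : DFSTree N) (u : ℕ) : Set ℕ :=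
  {w | w < N ∧ ∃ k, T.parent^[k] w = u}

/-- `w ∈ D(u)`: `w` is a strict descendant of `u`. -/
def StrictDesc (T : DFSTree N) (u w : ℕ) : Prop :=
  w ∈ T.descCl u ∧ w ≠ u

/-- `w` is a left-sibling of `u`. -/
def LeftSib (T : DFSTree N) (u w : ℕ) : Prop :=
  0 < w ∧ w < u ∧ T.parent w = T.parent u

/-- `w = l u` is the nearest left-cousin of `u`: the last vertex before `u` in the DFS order
having the same level as `u`. -/
def Nlc (T : DFSTree N) (u w : ℕ) : Prop :=
  w < u ∧ T.level w = T.level u ∧ ∀ c, w < c → c < u → T.level c ≠ T.level u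

/-- `w = r u` is the nearest right-cousin of `u`: the first vertex after `u` in the DFS order
having the same level as `u`. -/
def Nrc (T : DFSTree N) (u w : ℕ) : Prop :=
  u < w ∧ w < N ∧ T.level w = T.level u ∧ ∀ c, u < c → c < w → T.level c ≠ T.level u

/-- The arc relation generating `G^h_T`: rules (G1)–(G4). -/
def Arc (T : DFSTree N) (h : ℕ) (u w : ℕ) : Prop :=
  -- (G1) w ∈ D(u)
  T.StrictDesc u w
  -- (G2) w is a left-sibling of u, or a strict descendant of a left-sibling of u
  ∨ (∃ s, T.LeftSib u s ∧ (w = s ∨ T.StrictDesc s w))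
  -- (G3) w = l(u*) (u* the parent of u), or a strict descendant of l(u*)
  ∨ (0 < u ∧ ∃ s, T.Nlc (T.parent u) s ∧ (w = s ∨ T.StrictDesc s w))
  -- (G4) with u' the h-th ancestor of u
  ∨ (w = T.parent^[h] u
      ∨ T.Nlc (T.parent^[h] u) w
      ∨ T.Nrc (T.parent^[h] u) w
      ∨ (((∃ s, T.Nlc (T.parent^[h] u) s ∧ T.StrictDesc s w)
            ∨ T.StrictDesc (T.parent^[h] u) w
            ∨ (∃ s, T.Nrc (T.parent^[h] u) s ∧ T.StrictDesc s w))
          ∧ T.level w ≤ T.level u))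

/-- The graph `G^h_T` that is `h`-generated by `T`, as a simple graph on `ℕ` all of whose
edges lie within the vertex set `{0, …, N-1}` of `T`. -/
def graph (T : DFSTree N) (h : ℕ) : SimpleGraph ℕ :=
  SimpleGraph.fromRel (fun u w => u < N ∧ w < N ∧ T.Arc h u w)

/-- `T` is a `(K, s)`-tree: conditions (T1)–(T4), where `ν u = |D[u]|`. -/
def IsKSTree (T : DFSTree N) (K s : ℕ) : Prop :=
  ∀ u, u < N →
    -- (T1) if l(l(u)) exists then ν(l(l(u))) + ν(l(u)) ≥ ν(u)
    ((∀ a b, T.Nlc u a → T.Nlc a b →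
        (T.descCl u).ncard ≤ (T.descCl b).ncard + (T.descCl a).ncard) ∧
     -- (T2) if l(u) exists then K·ν(l(u)) ≥ ν(u)
     (∀ a, T.Nlc u a → (T.descCl u).ncard ≤ K * (T.descCl a).ncard) ∧
     -- (T3) if u is not the rightmost vertex of its level then ν(u) ≥ ν(u')
     -- for every u' with L(u') ≥ L(u) + s
     ((∃ w, u < w ∧ w < N ∧ T.level w = T.level u) →
        ∀ u', u' < N → T.level u + s ≤ T.level u' →
          (T.descCl u').ncard ≤ (T.descCl u).ncard) ∧
     -- (T4) if u has a child and l(u) exists then l(u) has a child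
     ((∃ c, 0 < c ∧ c < N ∧ T.parent c = u) →
        ∀ a, T.Nlc u a → ∃ c', 0 < c' ∧ c' < N ∧ T.parent c' = a))

end DFSTree

namespace DFSTree

variable {N : ℕ}

lemma parent_le (T : DFSTree N) {v : ℕ} (hv : v < N) : T.parent v ≤ v := by
  rcases Nat.eq_zero_or_pos v with h | h
  · simp [h, T.parent_zero]
  · exact (T.parent_lt v h hv).le

lemma iterate_le (T : DFSTree N) (k : ℕ) : ∀ {v : ℕ}, v < N → T.parent^[k] v ≤ v := by
  induction k with
  | zero => intro v _; simp
  | succ k ih =>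
    intro v hv
    rw [Function.iterate_succ_apply]
    have h1 : T.parent v ≤ v := T.parent_le hv
    exact le_trans (ih (lt_of_le_of_lt h1 hv)) h1

lemma exists_reach_zero (T : DFSTree N) : ∀ v, v < N → ∃ k, T.parent^[k] v = 0 := by
  intro v
  induction v using Nat.strong_induction_on with
  | _ v ih =>
    intro hv
    rcases Nat.eq_zero_or_pos v with h | h
    · exact ⟨0, h⟩
    · have hp := T.parent_lt v h hv
      obtain ⟨k, hk⟩ := ih (T.parent v) hp (lt_trans hp hv)
      exact ⟨k + 1, by rw [Function.iterate_succ_apply]; exact hk⟩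

lemma level_parent (T : DFSTree N) {v : ℕ} (h0 : 0 < v) (hv : v < N) :
    T.level v = T.level (T.parent v) + 1 := by
  have hpN : T.parent v < N := lt_trans (T.parent_lt v h0 hv) hv
  have hne : {k | T.parent^[k] (T.parent v) = 0}.Nonempty := T.exists_reach_zero _ hpN
  have h1 : T.parent^[T.level (T.parent v)] (T.parent v) = 0 := Nat.sInf_mem hne
  apply le_antisymm
  · apply Nat.sInf_le
    show T.parent^[T.level (T.parent v) + 1] v = 0
    rw [Function.iterate_succ_apply]; exact h1
  · have hne2 : {k | T.parent^[k] v = 0}.Nonempty := T.exists_reach_zero v hv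
    have h2 : T.parent^[T.level v] v = 0 := Nat.sInf_mem hne2
    have hpos : T.level v ≠ 0 := by
      intro h; rw [h] at h2; simp at h2; omega
    obtain ⟨t, ht⟩ := Nat.exists_eq_succ_of_ne_zero hpos
    rw [ht, Function.iterate_succ_apply] at h2
    have : T.level (T.parent v) ≤ t := Nat.sInf_le h2
    omega

lemma level_lt_of_desc (T : DFSTree N) :
    ∀ m v, v < N → ∀ u, T.parent^[m] v = u → v ≠ u → T.level u < T.level v := by
  intro m
  induction m with
  | zero => intro v _ u h hne; exact absurd h hne
  | succ m ih =>
    intro v hv u h hne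
    have h0 : 0 < v := by
      rcases Nat.eq_zero_or_pos v with hz | hz
      · exfalso
        subst hz
        rw [Function.iterate_succ_apply, T.parent_zero,
          Function.iterate_fixed T.parent_zero m] at h
        exact hne h
      · exact hz
    rw [Function.iterate_succ_apply] at h
    have hpN : T.parent v < N := lt_trans (T.parent_lt v h0 hv) hv
    have hlv := T.level_parent h0 hv
    rcases eq_or_ne (T.parent v) u with he | hne'
    · subst he; omega
    · have := ih (T.parent v) hpN u h hne'
      omega

lemma desc_of_between (T : DFSTree N) :
    ∀ w, w < N → ∀ u, (∃ k, T.parent^[k] w = u) → ∀ v, u ≤ v → v ≤ w →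
      ∃ k, T.parent^[k] v = u := by
  intro w
  induction w using Nat.strong_induction_on with
  | _ w ih =>
    rintro hw u ⟨k, hk⟩ v huv hvw
    rcases eq_or_lt_of_le hvw with rfl | hlt
    · exact ⟨k, hk⟩
    · have hw0 : 0 < w := by omega
      have hku : u < w := lt_of_le_of_lt huv hlt
      have hk0 : k ≠ 0 := by rintro rfl; simp at hk; omega
      obtain ⟨k', rfl⟩ := Nat.exists_eq_succ_of_ne_zero hk0
      rw [Function.iterate_succ_apply] at hk
      obtain ⟨j, hj⟩ := T.preorder_chain w hw0 hw
      have hkey : T.parent^[k' + j] (w - 1) = u := by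
        rw [Function.iterate_add_apply, hj, hk]
      exact ih (w - 1) (by omega) (by omega) u ⟨_, hkey⟩ v huv (by omega)

lemma exists_big_desc (T : DFSTree N) {n v : ℕ} (hn : n ≤ N) (hv : v < n)
    (hnc : v ∉ ⋃ x ∈ {x : ℕ | x < n ∧ T.descCl x ⊆ Set.Iio n ∧
          (x = 0 ∨ ¬ T.descCl (T.parent x) ⊆ Set.Iio n)}, T.descCl x) :
    ¬ T.descCl v ⊆ Set.Iio n := by
  intro hsub
  have hvN : v < N := lt_of_lt_of_le hv hn
  simp only [Set.mem_iUnion, Set.mem_setOf_eq, not_exists] at hnc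
  classical
  by_cases hall : ∀ m, T.descCl (T.parent^[m] v) ⊆ Set.Iio n
  · obtain ⟨k, hk⟩ := T.exists_reach_zero v hvN
    have h0 : T.descCl (0 : ℕ) ⊆ Set.Iio n := by
      have := hall k; rwa [hk] at this
    exact hnc 0 ⟨by omega, h0, Or.inl rfl⟩ ⟨hvN, k, hk⟩
  · push_neg at hall
    have hex : ∃ m, ¬ T.descCl (T.parent^[m] v) ⊆ Set.Iio n := hall
    set m := Nat.find hex with hm
    have hmspec : ¬ T.descCl (T.parent^[m] v) ⊆ Set.Iio n := Nat.find_spec hex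
    have hm0 : m ≠ 0 := by
      intro h; rw [h] at hmspec; simp only [Function.iterate_zero, id_eq] at hmspec
      exact hmspec hsub
    have hprev : T.descCl (T.parent^[m - 1] v) ⊆ Set.Iio n :=
      not_not.mp (Nat.find_min hex (by omega))
    set x := T.parent^[m - 1] v with hx
    have hxN : x < N := lt_of_le_of_lt (T.iterate_le _ hvN) hvN
    have hxn : x < n := hprev ⟨hxN, 0, rfl⟩
    have hpx : T.parent x = T.parent^[m] v := by
      have h1 : m = (m - 1) + 1 := by omega
      conv_rhs => rw [h1]
      rw [hx, Function.iterate_succ_apply']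
    refine hnc x ⟨hxn, hprev, Or.inr ?_⟩ ⟨hvN, m - 1, rfl⟩
    rw [hpx]; exact hmspec

end DFSTree

/-- Let `T` be a rooted ordered tree with DFS preorder `0, …, N-1` and let `U = {0, …, n-1}`
be a prefix. If `X` is the set of vertices `x ∈ U` with `D[x] ⊆ U` such that `x` is the root
or `D[x*] ⊄ U` for the parent `x*` of `x`, then `U \ ⋃_{x ∈ X} D[x]` contains at most one
vertex of each level. -/
theorem statement14 (N : ℕ) (T : DFSTree N) (n : ℕ) (hn : n ≤ N) (l : ℕ) :
    ({v : ℕ | v < n ∧ T.level v = l ∧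
        v ∉ ⋃ x ∈ {x : ℕ | x < n ∧ T.descCl x ⊆ Set.Iio n ∧
          (x = 0 ∨ ¬ T.descCl (T.parent x) ⊆ Set.Iio n)}, T.descCl x}).ncard ≤ 1 := by
  set S := {v : ℕ | v < n ∧ T.level v = l ∧
        v ∉ ⋃ x ∈ {x : ℕ | x < n ∧ T.descCl x ⊆ Set.Iio n ∧
          (x = 0 ∨ ¬ T.descCl (T.parent x) ⊆ Set.Iio n)}, T.descCl x} with hS
  have hfin : S.Finite := Set.Finite.subset (Set.finite_Iio n) (fun v hv => hv.1)
  rw [Set.ncard_le_one_iff hfin]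
  intro a b ha hb
  by_contra hne
  wlog hab : a < b generalizing a b
  · exact this hb ha (Ne.symm hne) (by omega)
  obtain ⟨han, hal, hanc⟩ := ha
  obtain ⟨hbn, hbl, hbnc⟩ := hb
  have hbig := T.exists_big_desc hn han hanc
  rw [Set.not_subset] at hbig
  obtain ⟨w, ⟨hwN, k, hwk⟩, hwn⟩ := hbig
  simp only [Set.mem_Iio, not_lt] at hwn
  have hdesc := T.desc_of_between w hwN a ⟨k, hwk⟩ b hab.le (by omega)
  obtain ⟨k', hk'⟩ := hdesc
  have := T.level_lt_of_desc k' b (lt_of_lt_of_le hbn hn) a hk' (by omega)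
  omega
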